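/- Let Q_τ^∨ be the submonoid of ⊕_η P_η^∨ ⊕ ⊕_q N (where η ranges over a finite index set of 'generic points' with associated dual monoids P_η^∨ = Hom(P_η, N), and q over a finite set of 'nodes' with attached elements u_q and pairs of adjacent indices η_1(q), η_2(q)) defined by the conditions V_{η_2(q)} - V_{η_1(q)} = e_q u_q in the groupification for each q. Then Q_τ^∨ is a finitely generated submonoid, and the basic monoid Q_τ := Hom(Q_τ^∨, N) is a finitely generated, saturated, sharp monoid whenever Q_τ^∨ generates a subgroup on which it is sharp. -/

import Mathlib

/-- Inclusion of `ℕ`-valued monoid homomorphisms into `ℤ`-valued ones (groupification of the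
dual monoid `Hom(P, ℕ)` inside `Hom(P, ℤ)`). -/
def toZHom {P : Type} [AddCommMonoid P] (f : P →+ ℕ) : P →+ ℤ :=
  (Nat.castAddMonoidHom ℤ).comp f

/-- The monoid `Q_τ^∨`: the submonoid of `⊕_η Hom(P_η, ℕ) ⊕ ⊕_q ℕ` consisting of tuples
`((V_η)_η, (e_q)_q)` satisfying `V_{η₂(q)} - V_{η₁(q)} = e_q u_q` in `⊕_η Hom(P_η, ℤ)` for
every node `q`. -/
def QtauDual {H Nq : Type} [Fintype H] [DecidableEq H] [Fintype Nq]
    (P : H → Type) [∀ η, AddCommMonoid (P η)]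
    (η₁ η₂ : Nq → H) (u : Nq → ∀ η, P η →+ ℤ) :
    AddSubmonoid ((∀ η, P η →+ ℕ) × (Nq → ℕ)) where
  carrier := {x | ∀ q : Nq,
    Pi.single (η₂ q) (toZHom (x.1 (η₂ q))) - Pi.single (η₁ q) (toZHom (x.1 (η₁ q)))
      = x.2 q • u q}
  zero_mem' := by
    intro q
    simp [toZHom]
  add_mem' := by
    intro a b ha hb q
    have h1 := ha q
    have h2 := hb q
    simp only [Prod.fst_add, Prod.snd_add, Pi.add_apply, toZHom, AddMonoidHom.comp_add,
      Pi.single_add, add_smul] at *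
    rw [← h1, ← h2]
    abel

def natSol {ι : Type} [Fintype ι] (L : AddSubgroup (ι → ℤ)) : AddSubmonoid (ι → ℕ) where
  carrier := {v | (fun i => (v i : ℤ)) ∈ L}
  zero_mem' := by
    have : (fun i : ι => ((0 : ι → ℕ) i : ℤ)) = 0 := by funext i; simp
    show (fun i : ι => ((0 : ι → ℕ) i : ℤ)) ∈ L
    rw [this]
    exact L.zero_mem
  add_mem' := by
    intro a b ha hb
    have : (fun i : ι => ((a + b) i : ℤ)) =
        (fun i => (a i : ℤ)) + fun i => (b i : ℤ) := by funext i; exact_mod_cast rfl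
    show (fun i : ι => ((a + b) i : ℤ)) ∈ L
    rw [this]
    exact L.add_mem ha hb

theorem natPi_isPWO {ι : Type} [Fintype ι] (s : Set (ι → ℕ)) : s.IsPWO := by
  have H : ∀ _ : ι, IsWellOrder ℕ (· < ·) := fun _ => inferInstance
  exact Set.isPWO_of_wellQuasiOrderedLE s

theorem natSol_fg {ι : Type} [Fintype ι] (L : AddSubgroup (ι → ℤ)) : (natSol L).FG := by
  classical
  set T : Set (ι → ℕ) := (natSol L : Set (ι → ℕ)) with hT
  -- the set of minimal nonzero elements
  set Min : Set (ι → ℕ) :=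
    {v | v ∈ T ∧ v ≠ 0 ∧ ∀ w ∈ T, w ≠ 0 → w ≤ v → w = v} with hMin
  have hanti : IsAntichain (· ≤ ·) Min := by
    intro x hx y hy hxy hle
    exact hxy (hy.2.2 x hx.1 hx.2.1 hle)
  have hfin : Min.Finite :=
    hanti.finite_of_partiallyWellOrderedOn (natPi_isPWO Min)
  -- subtraction stays in T
  have hsub : ∀ v ∈ T, ∀ m ∈ T, m ≤ v → v - m ∈ T := by
    intro v hv m hm hle
    have : (fun i => ((v - m) i : ℤ)) =
        (fun i => (v i : ℤ)) - fun i => (m i : ℤ) := by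
      funext i
      simp [Nat.cast_sub (hle i)]
    show (fun i => ((v - m) i : ℤ)) ∈ L
    rw [this]
    exact L.sub_mem hv hm
  -- every element of T is in the closure of Min
  have hgen : ∀ n : ℕ, ∀ v ∈ T, (∑ i, v i) = n → v ∈ AddSubmonoid.closure Min := by
    intro n
    induction n using Nat.strong_induction_on with
    | _ n ih =>
      intro v hv hsum
      by_cases hv0 : v = 0
      · subst hv0; exact AddSubmonoid.zero_mem _
      · -- find a minimal element below v
        have hA : ({w | w ∈ T ∧ w ≠ 0 ∧ w ≤ v} : Set (ι → ℕ)).IsWF :=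
          (natPi_isPWO _).isWF
        have hne : ({w | w ∈ T ∧ w ≠ 0 ∧ w ≤ v} : Set (ι → ℕ)).Nonempty :=
          ⟨v, hv, hv0, le_refl v⟩
        set m := hA.min hne with hm
        have hmmem := hA.min_mem hne
        have hmMin : m ∈ Min := by
          refine ⟨hmmem.1, hmmem.2.1, ?_⟩
          intro w hw hw0 hwle
          by_contra hne'
          exact hA.not_lt_min hne ⟨hw, hw0, le_trans hwle hmmem.2.2⟩
            (lt_of_le_of_ne hwle hne')
        have hvm : v - m ∈ T := hsub v hv m hmmem.1 hmmem.2.2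
        have hsum' : (∑ i, (v - m) i) + (∑ i, m i) = ∑ i, v i := by
          rw [← Finset.sum_add_distrib]
          apply Finset.sum_congr rfl
          intro i _
          exact Nat.sub_add_cancel (hmmem.2.2 i)
        have hmpos : 0 < ∑ i, m i := by
          rcases Function.ne_iff.1 hmmem.2.1 with ⟨i, hi⟩
          exact Finset.sum_pos' (fun _ _ => Nat.zero_le _)
            ⟨i, Finset.mem_univ i, Nat.pos_of_ne_zero hi⟩
        have hlt : (∑ i, (v - m) i) < n := by omega
        have h1 : v - m ∈ AddSubmonoid.closure Min := ih _ hlt _ hvm rfl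
        have h2 : m ∈ AddSubmonoid.closure Min := AddSubmonoid.subset_closure hmMin
        have : v - m + m = v := by
          funext i
          exact Nat.sub_add_cancel (hmmem.2.2 i)
        rw [← this]
        exact AddSubmonoid.add_mem _ h1 h2
  refine ⟨hfin.toFinset, le_antisymm ?_ ?_⟩
  · rw [AddSubmonoid.closure_le]
    intro x hx
    simp only [Set.Finite.coe_toFinset] at hx
    exact hx.1
  · intro v hv
    have := hgen (∑ i, v i) v hv rfl
    simpa [Set.Finite.coe_toFinset] using this

theorem fg_of_embed {ι M : Type} [Fintype ι] [AddCommMonoid M]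
    (j : M →+ (ι → ℕ)) (hj : Function.Injective j) (L : AddSubgroup (ι → ℤ))
    (hL : ∀ v : ι → ℕ, v ∈ Set.range j ↔ (fun i => (v i : ℤ)) ∈ L) :
    AddMonoid.FG M := by
  have hrange : AddMonoidHom.mrange j = natSol L := by
    ext v
    rw [AddMonoidHom.mem_mrange]
    exact hL v
  have h1 : AddMonoid.FG (AddMonoidHom.mrange j) := by
    rw [hrange]
    exact (AddMonoid.fg_iff_addSubmonoid_fg _).2 (natSol_fg L)
  have hinj : Function.Injective j.mrangeRestrict := by
    intro a b hab
    exact hj (congrArg Subtype.val hab)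
  have e := AddEquiv.ofBijective j.mrangeRestrict
    ⟨hinj, j.mrangeRestrict_surjective⟩
  exact AddMonoid.fg_of_surjective e.symm.toAddMonoidHom e.symm.surjective

-- helpers
/-- Build an `ℕ`-valued hom from a nonnegative `ℤ`-valued hom. -/
def toNatHom {M : Type} [AddCommMonoid M] (φ : M →+ ℤ) (h : ∀ x, 0 ≤ φ x) : M →+ ℕ where
  toFun x := (φ x).toNat
  map_zero' := by simp
  map_add' x y := by show (φ (x + y)).toNat = (φ x).toNat + (φ y).toNat; rw [map_add, Int.toNat_add (h x) (h y)]

theorem toZHom_toNatHom {M : Type} [AddCommMonoid M] (φ : M →+ ℤ) (h : ∀ x, 0 ≤ φ x) :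
    toZHom (toNatHom φ h) = φ := by
  ext x
  simp [toZHom, toNatHom, Int.toNat_of_nonneg (h x)]

theorem nonneg_of_nonneg_on_gens {P : Type} [AddCommMonoid P] (φ : P →+ ℤ)
    {s : Set P} (hs : AddSubmonoid.closure s = ⊤) (h : ∀ x ∈ s, 0 ≤ φ x) (p : P) :
    0 ≤ φ p := by
  have hp : p ∈ AddSubmonoid.closure s := hs ▸ AddSubmonoid.mem_top p
  induction hp using AddSubmonoid.closure_induction with
  | mem x hx => exact h x hx
  | zero => simp
  | add x y _ _ hx hy => rw [map_add]; exact add_nonneg hx hy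

theorem sum_single_smul {α M : Type} [Fintype α] [DecidableEq α] [AddCommMonoid M]
    (s : α) (c : α → M) : (∑ t, (Pi.single s (1 : ℕ) : α → ℕ) t • c t) = c s := by
  rw [Fintype.sum_eq_single s]
  · rw [Pi.single_eq_same, one_smul]
  · intro b hb
    rw [Pi.single_eq_of_ne hb, zero_smul]

theorem exists_rep {M : Type} [AddCommMonoid M] (S : Finset M)
    (hS : AddSubmonoid.closure (S : Set M) = ⊤) (x : M) :
    ∃ a : S → ℕ, x = ∑ s : S, a s • (s : M) := by
  classical
  have hx : x ∈ AddSubmonoid.closure (S : Set M) := hS ▸ AddSubmonoid.mem_top x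
  induction hx using AddSubmonoid.closure_induction with
  | mem y hy =>
      refine ⟨Pi.single ⟨y, hy⟩ 1, ?_⟩
      rw [sum_single_smul]
  | zero => exact ⟨0, by simp⟩
  | add y z _ _ hy hz =>
      obtain ⟨a, ha⟩ := hy
      obtain ⟨b, hb⟩ := hz
      exact ⟨a + b, by rw [ha, hb, ← Finset.sum_add_distrib]; simp [add_smul]⟩


/-- `Q_τ^∨` is a finitely generated monoid, and whenever `Q_τ^∨` is sharp on
the subgroup it generates, the basic monoid `Q_τ := Hom(Q_τ^∨, ℕ)` is finitely generated,
saturated and sharp. Here the `P_η` are fine (finitely generated and cancellative) saturated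
monoids and the `u_q` are fixed elements of `⊕_η Hom(P_η, ℤ)`. -/
theorem basic_monoid_fine_saturated_sharp
    {H Nq : Type} [Fintype H] [DecidableEq H] [Fintype Nq]
    (P : H → Type) [∀ η, AddCommMonoid (P η)] [∀ η, AddMonoid.FG (P η)]
    [∀ η, IsCancelAdd (P η)]
    (hPsat : ∀ (η : H) (n : ℕ) (a b : P η), 0 < n →
      (∃ c : P η, n • a = n • b + c) → ∃ d : P η, a = b + d)
    (η₁ η₂ : Nq → H) (u : Nq → ∀ η, P η →+ ℤ)
    (hsharp : ∀ x ∈ QtauDual P η₁ η₂ u, ∀ y ∈ QtauDual P η₁ η₂ u, x + y = 0 → x = 0) :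
    AddMonoid.FG (QtauDual P η₁ η₂ u) ∧
    AddMonoid.FG ((QtauDual P η₁ η₂ u) →+ ℕ) ∧
    (∀ f g : (QtauDual P η₁ η₂ u) →+ ℕ, f + g = 0 → f = 0) ∧
    (∀ (f : (QtauDual P η₁ η₂ u) →+ ℤ) (n : ℕ), 0 < n →
      (∃ g : (QtauDual P η₁ η₂ u) →+ ℕ, ∀ x, (n : ℤ) • f x = toZHom g x) →
      ∃ g : (QtauDual P η₁ η₂ u) →+ ℕ, ∀ x, f x = toZHom g x) := by
  classical
  have part1 : AddMonoid.FG (QtauDual P η₁ η₂ u) := by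
    have hfg := fun η => (inferInstance : AddMonoid.FG (P η)).fg_top
    choose S hS using hfg
    let j : (QtauDual P η₁ η₂ u) →+ ((Σ η : H, ↥(S η)) ⊕ Nq → ℕ) :=
      { toFun := fun x => Sum.elim (fun p => x.1.1 p.1 ↑p.2) (fun q => x.1.2 q)
        map_zero' := by funext i; rcases i with p | q <;> rfl
        map_add' := by intro a b; funext i; rcases i with p | q <;> rfl }
    have hj : Function.Injective j := by
      intro x y h
      refine Subtype.ext (Prod.ext ?_ ?_)
      · funext η
        refine AddMonoidHom.eq_of_eqOn_denseM (hS η) ?_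
        intro s hs
        exact congrFun h (Sum.inl ⟨η, ⟨s, hs⟩⟩)
      · funext q
        exact congrFun h (Sum.inr q)
    let L : AddSubgroup ((Σ η : H, ↥(S η)) ⊕ Nq → ℤ) :=
      { carrier := {v | ∃ φ : ∀ η, P η →+ ℤ,
          (∀ p : Σ η : H, ↥(S η), φ p.1 ↑p.2 = v (Sum.inl p)) ∧
          ∀ q, Pi.single (η₂ q) (φ (η₂ q)) - Pi.single (η₁ q) (φ (η₁ q))
            = v (Sum.inr q) • u q}
        zero_mem' := ⟨0, fun p => rfl, fun q => by simp⟩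
        add_mem' := by
          rintro a b ⟨φ, hφ1, hφ2⟩ ⟨ψ, hψ1, hψ2⟩
          refine ⟨φ + ψ, fun p => ?_, fun q => ?_⟩
          · rw [Pi.add_apply, AddMonoidHom.add_apply, hφ1 p, hψ1 p]; rfl
          · show Pi.single (η₂ q) ((φ + ψ) (η₂ q)) - Pi.single (η₁ q) ((φ + ψ) (η₁ q))
              = (a + b) (Sum.inr q) • u q
            rw [Pi.add_apply, Pi.add_apply, Pi.single_add, Pi.single_add,
              Pi.add_apply, add_smul, ← hφ2 q, ← hψ2 q]
            abel
        neg_mem' := by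
          rintro a ⟨φ, hφ1, hφ2⟩
          refine ⟨-φ, fun p => ?_, fun q => ?_⟩
          · rw [Pi.neg_apply, AddMonoidHom.neg_apply, hφ1 p]; rfl
          · show Pi.single (η₂ q) ((-φ) (η₂ q)) - Pi.single (η₁ q) ((-φ) (η₁ q))
              = (-a) (Sum.inr q) • u q
            rw [Pi.neg_apply, Pi.neg_apply, Pi.single_neg, Pi.single_neg,
              Pi.neg_apply, neg_smul, ← hφ2 q]
            abel }
    refine fg_of_embed j hj L ?_
    intro v
    constructor
    · rintro ⟨x, rfl⟩
      refine ⟨fun η => toZHom (x.1.1 η), fun p => rfl, fun q => ?_⟩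
      have := x.2 q
      rw [this]
      show _ = ((x.1.2 q : ℤ)) • u q
      rw [natCast_zsmul]
    · rintro ⟨φ, hφ1, hφ2⟩
      have hnn : ∀ η, ∀ p : P η, 0 ≤ φ η p := by
        intro η
        refine nonneg_of_nonneg_on_gens (φ η) (hS η) ?_
        intro s hs
        rw [hφ1 ⟨η, ⟨s, hs⟩⟩]
        exact Int.natCast_nonneg _
      refine ⟨⟨(fun η => toNatHom (φ η) (hnn η), fun q => v (Sum.inr q)), ?_⟩, ?_⟩
      · intro q
        show Pi.single (η₂ q) (toZHom (toNatHom (φ (η₂ q)) (hnn (η₂ q))))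
            - Pi.single (η₁ q) (toZHom (toNatHom (φ (η₁ q)) (hnn (η₁ q))))
            = v (Sum.inr q) • u q
        rw [toZHom_toNatHom, toZHom_toNatHom, hφ2 q, ← natCast_zsmul]
      · funext i
        rcases i with p | q
        · show (φ p.1 ↑p.2).toNat = v (Sum.inl p)
          rw [hφ1 p]
          exact Int.toNat_natCast _
        · rfl
  refine ⟨part1, ?_, ?_, ?_⟩
  · -- FG of the dual
    obtain ⟨S, hS⟩ := part1.fg_top
    let j' : ((QtauDual P η₁ η₂ u) →+ ℕ) →+ (↥S → ℕ) :=
      { toFun := fun f s => f ↑s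
        map_zero' := rfl
        map_add' := fun f g => rfl }
    have hj' : Function.Injective j' := by
      intro f g h
      refine AddMonoidHom.eq_of_eqOn_denseM hS ?_
      intro s hs
      exact congrFun h ⟨s, hs⟩
    let L : AddSubgroup (↥S → ℤ) :=
      { carrier := {w | ∀ a b : ↥S → ℕ,
          (∑ s : ↥S, a s • (s : QtauDual P η₁ η₂ u))
            = (∑ s : ↥S, b s • (s : QtauDual P η₁ η₂ u)) →
          (∑ s : ↥S, (a s : ℤ) * w s) = ∑ s : ↥S, (b s : ℤ) * w s}
        zero_mem' := by intro a b _; simp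
        add_mem' := by
          intro x y hx hy a b hab
          simp only [Pi.add_apply, mul_add, Finset.sum_add_distrib]
          rw [hx a b hab, hy a b hab]
        neg_mem' := by
          intro x hx a b hab
          simp only [Pi.neg_apply, mul_neg]
          rw [Finset.sum_neg_distrib, Finset.sum_neg_distrib, hx a b hab] }
    refine fg_of_embed j' hj' L ?_
    intro w
    constructor
    · rintro ⟨f, rfl⟩ a b hab
      have h2 := congrArg f hab
      rw [map_sum, map_sum] at h2
      simp only [map_nsmul, smul_eq_mul] at h2
      beta_reduce
      exact_mod_cast h2
    · intro hw
      have hrep := fun x => exists_rep S hS x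
      choose rep hrepx using hrep
      have key : ∀ (a : ↥S → ℕ) (x : QtauDual P η₁ η₂ u),
          x = (∑ s : ↥S, a s • (s : QtauDual P η₁ η₂ u)) →
          (∑ s : ↥S, rep x s * w s) = ∑ s : ↥S, a s * w s := by
        intro a x hx
        have := hw (rep x) a (by rw [← hrepx x, hx])
        beta_reduce at this
        exact_mod_cast this
      refine ⟨{ toFun := fun x => ∑ s : ↥S, rep x s * w s
                map_zero' := by
                  show (∑ s : ↥S, rep 0 s * w s) = 0
                  rw [key 0 0 (by simp)]; simp
                map_add' := by
                  intro x y
                  show (∑ s : ↥S, rep (x + y) s * w s) = (∑ s : ↥S, rep x s * w s) + ∑ s : ↥S, rep y s * w s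
                  rw [key (rep x + rep y) (x + y) ?_, key (rep x) x (hrepx x),
                    key (rep y) y (hrepx y)]
                  · simp only [Pi.add_apply, add_mul, Finset.sum_add_distrib]
                  · conv_lhs => rw [hrepx x, hrepx y]
                    rw [← Finset.sum_add_distrib]
                    simp [add_smul] }, ?_⟩
      funext s
      show (∑ t : ↥S, rep (↑s) t * w t) = w s
      rw [key (Pi.single s 1) ↑s (sum_single_smul s _).symm]
      simpa [smul_eq_mul] using sum_single_smul (M := ℕ) s w
  · -- sharpness of the dual
    intro f g hfg
    ext x
    have := congrFun (congrArg (fun h : _ →+ ℕ => (h : _ → ℕ)) hfg) x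
    simp only [AddMonoidHom.add_apply, AddMonoidHom.zero_apply] at this
    simpa using Nat.eq_zero_of_add_eq_zero_right this
  · -- saturatedness of the dual
    intro f n hn ⟨g, hg⟩
    have hnn : ∀ x, 0 ≤ f x := by
      intro x
      have h1 : 0 ≤ (n : ℤ) * f x := by
        rw [← smul_eq_mul, hg x]
        simp [toZHom]
      by_contra h'
      push_neg at h'
      have := mul_neg_of_pos_of_neg (by exact_mod_cast hn : (0:ℤ) < n) h'
      omega
    exact ⟨toNatHom f hnn, fun x => by rw [toZHom_toNatHom]⟩
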